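/- arXiv:2310.05613 — 5 statements merged into one kernel-verified Lean document; each statement's English description precedes it below -/
import Mathlib

section
/- Let k be a commutative ring and A = (A_T, A_N, ι, A_0) a constraint k-algebra with both A_T and A_N commutative, and let (μ_r)_{r≥0} be a formal associative deformation of A. Define brackets {a,b}_T := μ_1^T(a,b) − μ_1^T(b,a) on A_T and {a,b}_N := μ_1^N(a,b) − μ_1^N(b,a) on A_N. Then: (1) each bracket is k-bilinear and antisymmetric; (2) each bracket satisfies the Jacobi identity; (3) each bracket satisfies the Leibniz rule {a, b·c} = {a,b}·c + b·{a,c}; (4) ι({a,b}_N) = {ι(a), ι(b)}_T for all a, b ∈ A_N; (5) {a,b}_N ∈ A_0 whenever a ∈ A_0 or b ∈ A_0. In other words, the pair of brackets is a constraint Poisson structure on A. -/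
universe u v w

/-- A constraint `k`-algebra: two associative `k`-algebras `A_T` and `A_N`,
a `k`-algebra homomorphism `ι : A_N → A_T`, and a two-sided ideal `A_0 ⊆ A_N`. -/
structure ConstraintAlgebra (k : Type u) [CommRing k] (AT : Type v) (AN : Type w)
    [Ring AT] [Ring AN] [Algebra k AT] [Algebra k AN] where
  iota : AN →ₐ[k] AT
  zero : Submodule k AN
  mul_mem_zero : ∀ x a : AN, a ∈ zero → x * a ∈ zero
  mem_zero_mul : ∀ x a : AN, a ∈ zero → a * x ∈ zero

/-- `k`-bilinearity of a map `M → M → M`. -/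
def IsBilinearFn (k : Type u) {M : Type v} [CommRing k] [AddCommGroup M] [Module k M]
    (f : M → M → M) : Prop :=
  (∀ x y z : M, f (x + y) z = f x z + f y z) ∧
  (∀ x y z : M, f x (y + z) = f x y + f x z) ∧
  (∀ (c : k) (x y : M), f (c • x) y = c • f x y) ∧
  ∀ (c : k) (x y : M), f x (c • y) = c • f x y

variable {k : Type u} [CommRing k] {AT : Type v} {AN : Type w}

/-- A constraint `2`-cochain: a pair of `k`-bilinear maps compatible with `ι` and with
the `0`-component. -/
def IsConstraint2Cochain [Ring AT] [Ring AN] [Algebra k AT] [Algebra k AN]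
    (A : ConstraintAlgebra k AT AN) (fT : AT → AT → AT) (fN : AN → AN → AN) : Prop :=
  IsBilinearFn k fT ∧ IsBilinearFn k fN ∧
    (∀ a b : AN, A.iota (fN a b) = fT (A.iota a) (A.iota b)) ∧
    ∀ a b : AN, a ∈ A.zero ∨ b ∈ A.zero → fN a b ∈ A.zero

/-- A formal associative deformation of a constraint algebra: a sequence of constraint
`2`-cochains starting at the multiplication such that the order-`n` associativity
condition holds for all `n` in both components. -/
def IsFormalDeformation [Ring AT] [Ring AN] [Algebra k AT] [Algebra k AN]
    (A : ConstraintAlgebra k AT AN) (μT : ℕ → AT → AT → AT) (μN : ℕ → AN → AN → AN) : Prop :=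
  (∀ r : ℕ, IsConstraint2Cochain A (μT r) (μN r)) ∧
    (∀ a b : AT, μT 0 a b = a * b) ∧ (∀ a b : AN, μN 0 a b = a * b) ∧
    (∀ (n : ℕ) (a b c : AT),
      ∑ i ∈ Finset.range (n + 1), (μT i (μT (n - i) a b) c - μT i a (μT (n - i) b c)) = 0) ∧
    ∀ (n : ℕ) (a b c : AN),
      ∑ i ∈ Finset.range (n + 1), (μN i (μN (n - i) a b) c - μN i a (μN (n - i) b c)) = 0

/-- A Poisson structure on a commutative algebra: a `k`-bilinear antisymmetric bracket
satisfying the Jacobi identity and the Leibniz rule. -/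
def IsPoissonStructure (k : Type u) {M : Type v} [CommRing k] [CommRing M] [Algebra k M]
    (br : M → M → M) : Prop :=
  IsBilinearFn k br ∧ (∀ a b : M, br a b = - br b a) ∧
    (∀ a b c : M, br a (br b c) + br b (br c a) + br c (br a b) = 0) ∧
    ∀ a b c : M, br a (b * c) = br a b * c + b * br a c

private lemma poisson_aux {M : Type*} [CommRing M] [Algebra k M]
    (μ : ℕ → M → M → M) (hbil : IsBilinearFn k (μ 1))
    (h0 : ∀ a b : M, μ 0 a b = a * b)
    (hassoc : ∀ (n : ℕ) (a b c : M),
      ∑ i ∈ Finset.range (n + 1), (μ i (μ (n - i) a b) c - μ i a (μ (n - i) b c)) = 0) :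
    IsPoissonStructure k (fun a b => μ 1 a b - μ 1 b a) := by
  obtain ⟨hl, hr, hsl, hsr⟩ := hbil
  have E1 : ∀ a b c : M,
      μ 1 a b * c - a * μ 1 b c + (μ 1 (a * b) c - μ 1 a (b * c)) = 0 := by
    intro a b c
    have := hassoc 1 a b c
    simp only [Finset.sum_range_succ, Finset.sum_range_zero, h0] at this
    linear_combination this
  have E2 : ∀ a b c : M,
      μ 2 a b * c - a * μ 2 b c + (μ 1 (μ 1 a b) c - μ 1 a (μ 1 b c))
        + (μ 2 (a * b) c - μ 2 a (b * c)) = 0 := by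
    intro a b c
    have := hassoc 2 a b c
    simp only [Finset.sum_range_succ, Finset.sum_range_zero, h0] at this
    linear_combination this
  refine ⟨⟨?_, ?_, ?_, ?_⟩, ?_, ?_, ?_⟩
  · intro x y z; simp only [hl, hr]; ring
  · intro x y z; simp only [hl, hr]; ring
  · intro c x y; simp only [hsl, hsr, smul_sub]
  · intro c x y; simp only [hsl, hsr, smul_sub]
  · intro a b; ring
  · -- Jacobi
    intro a b c
    have h1 := E2 a b c
    have h2 := E2 b c a
    have h3 := E2 c a b
    have h4 := E2 b a c
    have h5 := E2 c b a
    have h6 := E2 a c b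
    rw [mul_comm b a, mul_comm a c] at h4
    rw [mul_comm c b, mul_comm b a] at h5
    rw [mul_comm a c, mul_comm c b] at h6
    have hsubl : ∀ x y z : M, μ 1 (x - y) z = μ 1 x z - μ 1 y z := by
      intro x y z
      have := hl (x - y) y z
      rw [sub_add_cancel] at this
      linear_combination -this
    have hsubr : ∀ x y z : M, μ 1 x (y - z) = μ 1 x y - μ 1 x z := by
      intro x y z
      have := hr x (y - z) z
      rw [sub_add_cancel] at this
      linear_combination -this
    simp only [hsubl, hsubr]
    linear_combination (-1 : M) * h1 - h2 - h3 + h4 + h5 + h6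
  · -- Leibniz
    intro a b c
    have h1 := E1 a b c
    have h2 := E1 b c a
    have h3 := E1 b a c
    rw [mul_comm b a] at h3
    rw [mul_comm c a] at h2
    linear_combination (-1 : M) * h1 - h2 + h3

/-- A formal associative deformation of a commutative constraint algebra
induces a constraint Poisson structure via the first-order commutator. -/
theorem deformation_induces_constraint_poisson
    [CommRing AT] [CommRing AN] [Algebra k AT] [Algebra k AN]
    (A : ConstraintAlgebra k AT AN)
    (μT : ℕ → AT → AT → AT) (μN : ℕ → AN → AN → AN)
    (h : IsFormalDeformation A μT μN) :
    IsPoissonStructure k (fun a b => μT 1 a b - μT 1 b a) ∧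
    IsPoissonStructure k (fun a b => μN 1 a b - μN 1 b a) ∧
    (∀ a b : AN,
      A.iota (μN 1 a b - μN 1 b a)
        = μT 1 (A.iota a) (A.iota b) - μT 1 (A.iota b) (A.iota a)) ∧
    ∀ a b : AN, a ∈ A.zero ∨ b ∈ A.zero → μN 1 a b - μN 1 b a ∈ A.zero := by
  obtain ⟨hcoch, h0T, h0N, hT, hN⟩ := h
  obtain ⟨hbilT, hbilN, hiota, hzero⟩ := hcoch 1
  refine ⟨poisson_aux μT hbilT h0T hT, poisson_aux μN hbilN h0N hN, ?_, ?_⟩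
  · intro a b
    rw [map_sub, hiota, hiota]
  · intro a b hab
    exact sub_mem (hzero a b hab) (hzero b a hab.symm)
end

section
/- Let A = (A_T, A_N, ι, A_0) be a constraint k-algebra (only the underlying constraint module structure is used), let f = (f_T, f_N) be a constraint m-cochain and g = (g_T, g_N) a constraint n-cochain on A. Then the pair [f,g] = ([f_T, g_T], [f_N, g_N]) given by the Gerstenhaber bracket in each component is a constraint (m+n−1)-cochain; moreover, if f lies in the 0-component or g lies in the 0-component, then [f,g] lies in the 0-component. -/
universe u v w

/-- `k`-multilinearity of a map `(Fin n → M) → M`. -/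
def IsMultilinearFn (k : Type u) {M : Type v} [CommRing k] [AddCommGroup M] [Module k M]
    {n : ℕ} (f : (Fin n → M) → M) : Prop :=
  (∀ (v : Fin n → M) (i : Fin n) (x y : M),
      f (Function.update v i (x + y)) = f (Function.update v i x) + f (Function.update v i y)) ∧
  ∀ (v : Fin n → M) (i : Fin n) (c : k) (x : M),
      f (Function.update v i (c • x)) = c • f (Function.update v i x)

/-- The Gerstenhaber composition `f ∘ g` of an `(m+1)`-ary map with an `(n+1)`-ary map:
`(f∘g)(a_1,…,a_{m+n+1}) = Σ_i (−1)^{(i−1)(n−1)} f(a_1,…,a_{i−1}, g(a_i,…),…)`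
(in 0-indexed form, the sign is `(−1)^{i·n}`). -/
def gcomp {M : Type v} [AddCommGroup M] (m n : ℕ)
    (f : (Fin (m + 1) → M) → M) (g : (Fin (n + 1) → M) → M) :
    (Fin (m + n + 1) → M) → M := fun a =>
  ∑ i : Fin (m + 1), ((-1 : ℤ) ^ (i.val * n)) •
    f fun j =>
      if j.val < i.val then a ⟨j.val, by have hj := j.isLt; omega⟩
      else if j.val = i.val then
        g fun l => a ⟨i.val + l.val, by have hi := i.isLt; have hl := l.isLt; omega⟩
      else a ⟨j.val + n, by have hj := j.isLt; omega⟩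

/-- The Gerstenhaber bracket `[f,g] = f∘g − (−1)^{mn} g∘f` of an `(m+1)`-cochain and an
`(n+1)`-cochain (degrees `m` and `n`). -/
def gbracket {M : Type v} [AddCommGroup M] (m n : ℕ)
    (f : (Fin (m + 1) → M) → M) (g : (Fin (n + 1) → M) → M) :
    (Fin (m + n + 1) → M) → M := fun a =>
  gcomp m n f g a
    - ((-1 : ℤ) ^ (m * n)) •
        gcomp n m g f (fun j => a ⟨j.val, by have hj := j.isLt; omega⟩)

variable {k : Type u} [CommRing k] {AT : Type v} {AN : Type w}
  [Ring AT] [Ring AN] [Algebra k AT] [Algebra k AN]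

/-- A constraint `n`-cochain on a constraint algebra: a pair of `k`-multilinear maps
compatible with `ι` and mapping tuples with an entry in `A_0` into `A_0`. -/
def IsConstraintCochain (A : ConstraintAlgebra k AT AN) {n : ℕ}
    (fT : (Fin n → AT) → AT) (fN : (Fin n → AN) → AN) : Prop :=
  IsMultilinearFn k fT ∧ IsMultilinearFn k fN ∧
    (∀ a : Fin n → AN, A.iota (fN a) = fT fun i => A.iota (a i)) ∧
    ∀ a : Fin n → AN, (∃ i, a i ∈ A.zero) → fN a ∈ A.zero

section Helpers

variable {M : Type*} [AddCommGroup M] [Module k M]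

/-- The `i`-th "slot" tuple appearing in `gcomp`. -/
def gslot (m n : ℕ) (g : (Fin (n + 1) → M) → M) (i : Fin (m + 1))
    (a : Fin (m + n + 1) → M) : Fin (m + 1) → M := fun j =>
  if j.val < i.val then a ⟨j.val, by have hj := j.isLt; omega⟩
  else if j.val = i.val then
    g fun l => a ⟨i.val + l.val, by have hi := i.isLt; have hl := l.isLt; omega⟩
  else a ⟨j.val + n, by have hj := j.isLt; omega⟩

lemma gcomp_eq_sum (m n : ℕ) (f : (Fin (m + 1) → M) → M) (g : (Fin (n + 1) → M) → M)
    (a : Fin (m + n + 1) → M) :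
    gcomp m n f g a = ∑ i : Fin (m + 1), ((-1 : ℤ) ^ (i.val * n)) • f (gslot m n g i a) := rfl

lemma gslot_update_lt (m n : ℕ) (g : (Fin (n + 1) → M) → M) (i : Fin (m + 1))
    (a : Fin (m + n + 1) → M) (p : Fin (m + n + 1)) (x : M) (hp : p.val < i.val) :
    gslot m n g i (Function.update a p x) =
      Function.update (gslot m n g i a) ⟨p.val, by have := i.isLt; omega⟩ x := by
  funext j
  simp only [gslot, Function.update, eq_rec_constant, Fin.ext_iff]
  split_ifs <;> try (exfalso; omega)
  all_goals
    first
      | rfl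
      | exact congrArg a (Fin.ext (by omega))
      | (congr 1; funext l
         try simp only [Function.update, eq_rec_constant, Fin.ext_iff]
         try split_ifs <;> try (exfalso; omega)
         all_goals first | rfl | exact congrArg a (Fin.ext (by omega)))

lemma gslot_update_mid (m n : ℕ) (g : (Fin (n + 1) → M) → M) (i : Fin (m + 1))
    (a : Fin (m + n + 1) → M) (p : Fin (m + n + 1)) (x : M)
    (hp1 : i.val ≤ p.val) (hp2 : p.val < i.val + n + 1) :
    gslot m n g i (Function.update a p x) =
      Function.update (gslot m n g i a) i
        (g (Function.update
          (fun l : Fin (n + 1) => a ⟨i.val + l.val, by have := i.isLt; have := l.isLt; omega⟩)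
          ⟨p.val - i.val, by omega⟩ x)) := by
  funext j
  simp only [gslot, Function.update, eq_rec_constant, Fin.ext_iff]
  split_ifs <;> try (exfalso; omega)
  all_goals
    first
      | rfl
      | exact congrArg a (Fin.ext (by omega))
      | (congr 1; funext l
         try simp only [Function.update, eq_rec_constant, Fin.ext_iff]
         try split_ifs <;> try (exfalso; omega)
         all_goals first | rfl | exact congrArg a (Fin.ext (by omega)))

lemma gslot_update_ge (m n : ℕ) (g : (Fin (n + 1) → M) → M) (i : Fin (m + 1))
    (a : Fin (m + n + 1) → M) (p : Fin (m + n + 1)) (x : M)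
    (hp : i.val + n + 1 ≤ p.val) :
    gslot m n g i (Function.update a p x) =
      Function.update (gslot m n g i a) ⟨p.val - n, by have := p.isLt; omega⟩ x := by
  funext j
  simp only [gslot, Function.update, eq_rec_constant, Fin.ext_iff]
  split_ifs <;> try (exfalso; omega)
  all_goals
    first
      | rfl
      | exact congrArg a (Fin.ext (by omega))
      | (congr 1; funext l
         try simp only [Function.update, eq_rec_constant, Fin.ext_iff]
         try split_ifs <;> try (exfalso; omega)
         all_goals first | rfl | exact congrArg a (Fin.ext (by omega)))

lemma gslot_multilinear {m n : ℕ} {f : (Fin (m + 1) → M) → M} {g : (Fin (n + 1) → M) → M}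
    (hf : IsMultilinearFn k f) (hg : IsMultilinearFn k g) (i : Fin (m + 1)) :
    IsMultilinearFn k (fun a => f (gslot m n g i a)) := by
  constructor
  · intro v p x y
    dsimp only
    rcases lt_or_ge p.val i.val with hp | hp
    · rw [gslot_update_lt m n g i v p _ hp, gslot_update_lt m n g i v p _ hp,
        gslot_update_lt m n g i v p _ hp, hf.1]
    · rcases lt_or_ge p.val (i.val + n + 1) with hp2 | hp2
      · rw [gslot_update_mid m n g i v p _ hp hp2, gslot_update_mid m n g i v p _ hp hp2,
          gslot_update_mid m n g i v p _ hp hp2, hg.1, hf.1]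
      · rw [gslot_update_ge m n g i v p _ hp2, gslot_update_ge m n g i v p _ hp2,
          gslot_update_ge m n g i v p _ hp2, hf.1]
  · intro v p c x
    dsimp only
    rcases lt_or_ge p.val i.val with hp | hp
    · rw [gslot_update_lt m n g i v p _ hp, gslot_update_lt m n g i v p _ hp, hf.2]
    · rcases lt_or_ge p.val (i.val + n + 1) with hp2 | hp2
      · rw [gslot_update_mid m n g i v p _ hp hp2, gslot_update_mid m n g i v p _ hp hp2,
          hg.2, hf.2]
      · rw [gslot_update_ge m n g i v p _ hp2, gslot_update_ge m n g i v p _ hp2, hf.2]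

lemma IsMultilinearFn.sum {N : ℕ} {ι : Type*} (s : Finset ι) (F : ι → (Fin N → M) → M)
    (hF : ∀ i ∈ s, IsMultilinearFn k (F i)) :
    IsMultilinearFn k (fun a => ∑ i ∈ s, F i a) := by
  constructor
  · intro v i x y
    dsimp only
    rw [← Finset.sum_add_distrib]
    exact Finset.sum_congr rfl fun j hj => (hF j hj).1 v i x y
  · intro v i c x
    dsimp only
    rw [Finset.smul_sum]
    exact Finset.sum_congr rfl fun j hj => (hF j hj).2 v i c x

lemma IsMultilinearFn.zsmul {N : ℕ} {f : (Fin N → M) → M} (hf : IsMultilinearFn k f) (c : ℤ) :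
    IsMultilinearFn k (fun a => c • f a) := by
  refine ⟨fun v i x y => ?_, fun v i d x => ?_⟩
  · dsimp only; rw [hf.1 v i x y, smul_add]
  · dsimp only; rw [hf.2 v i d x, smul_comm]

lemma gcomp_multilinear {m n : ℕ} {f : (Fin (m + 1) → M) → M} {g : (Fin (n + 1) → M) → M}
    (hf : IsMultilinearFn k f) (hg : IsMultilinearFn k g) :
    IsMultilinearFn k (gcomp m n f g) := by
  have := IsMultilinearFn.sum (k := k) (Finset.univ : Finset (Fin (m + 1)))
    (fun i (a : Fin (m + n + 1) → M) => ((-1 : ℤ) ^ (i.val * n)) • f (gslot m n g i a))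
    (fun i _ => (gslot_multilinear hf hg i).zsmul _)
  exact this

/-- Reindexing along the `Fin` cast, as appears in `gbracket`. -/
lemma reindex_multilinear {N N' : ℕ} (h : N = N') {f : (Fin N → M) → M}
    (hf : IsMultilinearFn k f) :
    IsMultilinearFn k (fun a : Fin N' → M => f fun j => a ⟨j.val, h ▸ j.isLt⟩) := by
  subst h
  have he : ∀ a : Fin N → M, (fun j : Fin N => a ⟨j.val, j.isLt⟩) = a := by
    intro a; funext j; rfl
  simp only [he]
  exact hf

lemma IsMultilinearFn.sub {N : ℕ} {f g : (Fin N → M) → M}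
    (hf : IsMultilinearFn k f) (hg : IsMultilinearFn k g) :
    IsMultilinearFn k (fun a => f a - g a) := by
  refine ⟨fun v i x y => ?_, fun v i c x => ?_⟩
  · dsimp only; rw [hf.1 v i x y, hg.1 v i x y]; abel
  · dsimp only; rw [hf.2 v i c x, hg.2 v i c x, smul_sub]

end Helpers

section Helpers2

lemma gslot_apply_self {M : Type*} [AddCommGroup M] (m n : ℕ)
    (g : (Fin (n + 1) → M) → M) (i : Fin (m + 1)) (a : Fin (m + n + 1) → M) :
    gslot m n g i a i =
      g fun l => a ⟨i.val + l.val, by have := i.isLt; have := l.isLt; omega⟩ := by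
  simp [gslot]

lemma gslot_iota (A : ConstraintAlgebra k AT AN) {m n : ℕ}
    {gT : (Fin (n + 1) → AT) → AT} {gN : (Fin (n + 1) → AN) → AN}
    (hgι : ∀ a, A.iota (gN a) = gT fun i => A.iota (a i)) (i : Fin (m + 1))
    (a : Fin (m + n + 1) → AN) :
    (fun j => A.iota (gslot m n gN i a j)) = gslot m n gT i fun p => A.iota (a p) := by
  funext j
  simp only [gslot]
  split_ifs with h1 h2
  · rfl
  · exact hgι _
  · rfl

lemma gcomp_iota (A : ConstraintAlgebra k AT AN) {m n : ℕ}
    {fT : (Fin (m + 1) → AT) → AT} {fN : (Fin (m + 1) → AN) → AN}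
    {gT : (Fin (n + 1) → AT) → AT} {gN : (Fin (n + 1) → AN) → AN}
    (hfι : ∀ a, A.iota (fN a) = fT fun i => A.iota (a i))
    (hgι : ∀ a, A.iota (gN a) = gT fun i => A.iota (a i))
    (a : Fin (m + n + 1) → AN) :
    A.iota (gcomp m n fN gN a) = gcomp m n fT gT fun p => A.iota (a p) := by
  rw [gcomp_eq_sum, gcomp_eq_sum, map_sum]
  refine Finset.sum_congr rfl fun i _ => ?_
  rw [map_zsmul, hfι, gslot_iota A hgι i a]

lemma gslot_exists_zero (A : ConstraintAlgebra k AT AN) {m n : ℕ}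
    {gN : (Fin (n + 1) → AN) → AN}
    (hg0 : ∀ a : Fin (n + 1) → AN, (∃ i, a i ∈ A.zero) → gN a ∈ A.zero)
    (i : Fin (m + 1)) (a : Fin (m + n + 1) → AN) (h : ∃ p, a p ∈ A.zero) :
    ∃ j, gslot m n gN i a j ∈ A.zero := by
  obtain ⟨p, hp⟩ := h
  rcases lt_or_ge p.val i.val with h1 | h1
  · refine ⟨⟨p.val, by have := i.isLt; omega⟩, ?_⟩
    simp only [gslot, h1, if_pos]
    exact hp
  · rcases lt_or_ge p.val (i.val + n + 1) with h2 | h2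
    · refine ⟨i, ?_⟩
      rw [gslot_apply_self]
      refine hg0 _ ⟨⟨p.val - i.val, by omega⟩, ?_⟩
      convert hp using 2
      exact Fin.ext (by simp; omega)
    · refine ⟨⟨p.val - n, by have := p.isLt; omega⟩, ?_⟩
      have hn1 : ¬ (p.val - n < i.val) := by omega
      have hn2 : ¬ (p.val - n = i.val) := by omega
      simp only [gslot, hn1, hn2, if_neg, if_false]
      convert hp using 2
      exact Fin.ext (by simp; omega)

lemma gcomp_exists_zero (A : ConstraintAlgebra k AT AN) {m n : ℕ}
    {fN : (Fin (m + 1) → AN) → AN} {gN : (Fin (n + 1) → AN) → AN}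
    (hf0 : ∀ a : Fin (m + 1) → AN, (∃ i, a i ∈ A.zero) → fN a ∈ A.zero)
    (hg0 : ∀ a : Fin (n + 1) → AN, (∃ i, a i ∈ A.zero) → gN a ∈ A.zero)
    (a : Fin (m + n + 1) → AN) (h : ∃ p, a p ∈ A.zero) :
    gcomp m n fN gN a ∈ A.zero := by
  rw [gcomp_eq_sum]
  exact Submodule.sum_mem _ fun i _ =>
    zsmul_mem (hf0 _ (gslot_exists_zero A hg0 i a h)) _

end Helpers2

/-- The componentwise Gerstenhaber bracket of constraint cochains is a
constraint cochain; it maps the `0`-component (in either argument) to the `0`-component. -/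
theorem gerstenhaber_bracket_constraint (A : ConstraintAlgebra k AT AN) {m n : ℕ}
    (fT : (Fin (m + 1) → AT) → AT) (fN : (Fin (m + 1) → AN) → AN)
    (gT : (Fin (n + 1) → AT) → AT) (gN : (Fin (n + 1) → AN) → AN)
    (hf : IsConstraintCochain A fT fN) (hg : IsConstraintCochain A gT gN) :
    IsConstraintCochain A (gbracket m n fT gT) (gbracket m n fN gN) ∧
    (((∀ a : Fin (m + 1) → AN, fN a ∈ A.zero) ∨ (∀ a : Fin (n + 1) → AN, gN a ∈ A.zero)) →
      ∀ a : Fin (m + n + 1) → AN, gbracket m n fN gN a ∈ A.zero) := by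
  obtain ⟨hfT, hfN, hfι, hf0⟩ := hf
  obtain ⟨hgT, hgN, hgι, hg0⟩ := hg
  constructor
  · refine ⟨?_, ?_, ?_, ?_⟩
    · exact IsMultilinearFn.sub (gcomp_multilinear hfT hgT)
        (IsMultilinearFn.zsmul
          (reindex_multilinear (by omega) (gcomp_multilinear hgT hfT)) ((-1 : ℤ) ^ (m * n)))
    · exact IsMultilinearFn.sub (gcomp_multilinear hfN hgN)
        (IsMultilinearFn.zsmul
          (reindex_multilinear (by omega) (gcomp_multilinear hgN hfN)) ((-1 : ℤ) ^ (m * n)))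
    · intro a
      simp only [gbracket, map_sub, map_zsmul]
      rw [gcomp_iota A hfι hgι, gcomp_iota A hgι hfι]
    · rintro a ⟨p, hp⟩
      simp only [gbracket]
      refine sub_mem (gcomp_exists_zero A hf0 hg0 a ⟨p, hp⟩)
        (zsmul_mem (gcomp_exists_zero A hg0 hf0 _ ⟨⟨p.val, by have := p.isLt; omega⟩, hp⟩) _)
  · rintro (h0 | h0) a
    · simp only [gbracket]
      refine sub_mem ?_ (zsmul_mem ?_ _)
      · rw [gcomp_eq_sum]
        exact Submodule.sum_mem _ fun i _ => zsmul_mem (h0 _) _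
      · rw [gcomp_eq_sum]
        refine Submodule.sum_mem _ fun i _ => zsmul_mem (hg0 _ ⟨i, ?_⟩) _
        rw [gslot_apply_self]
        exact h0 _
    · simp only [gbracket]
      refine sub_mem ?_ (zsmul_mem ?_ _)
      · rw [gcomp_eq_sum]
        refine Submodule.sum_mem _ fun i _ => zsmul_mem (hf0 _ ⟨i, ?_⟩) _
        rw [gslot_apply_self]
        exact h0 _
      · rw [gcomp_eq_sum]
        exact Submodule.sum_mem _ fun i _ => zsmul_mem (h0 _) _
end

section
/- Let A = (A_T, A_N, ι, A_0) be a constraint k-algebra, f a constraint m-cochain and g a constraint n-cochain on A. Then: (1) the pair f∪g = (f_T∪g_T, f_N∪g_N) is a constraint (m+n)-cochain; (2) if f or g lies in the 0-component, then f∪g lies in the 0-component; (3) the Hochschild differential is a graded derivation of the cup product: δ(f∪g) = (δf)∪g + (−1)^m f∪(δg), in both the T- and the N-component. -/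
universe u v w

/-- The Hochschild differential of an `n`-multilinear map, with respect to a
multiplication `mul`. -/
def hochschildDiffM {M : Type v} [AddCommGroup M] (mul : M → M → M) {n : ℕ}
    (φ : (Fin n → M) → M) : (Fin (n + 1) → M) → M := fun a =>
  mul (a 0) (φ fun j => a j.succ)
    + (∑ i : Fin n, ((-1 : ℤ) ^ (i.val + 1)) •
        φ fun j => if j.val < i.val then a j.castSucc
          else if j.val = i.val then mul (a j.castSucc) (a j.succ)
          else a j.succ)
    + ((-1 : ℤ) ^ (n + 1)) • mul (φ fun j => a j.castSucc) (a (Fin.last n))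

/-- The cup product `(φ∪ψ)(a_1,…,a_{m+n}) = φ(a_1,…,a_m)·ψ(a_{m+1},…,a_{m+n})`. -/
def cup {M : Type v} [Mul M] {m n : ℕ}
    (φ : (Fin m → M) → M) (ψ : (Fin n → M) → M) : (Fin (m + n) → M) → M := fun a =>
  (φ fun i => a ⟨i.val, by have hi := i.isLt; omega⟩) *
    ψ fun j => a ⟨m + j.val, by have hj := j.isLt; omega⟩

variable {k : Type u} [CommRing k] {AT : Type v} {AN : Type w}
  [Ring AT] [Ring AN] [Algebra k AT] [Algebra k AN]

/-! The cup product is built from the multiplications of `A_T` and `A_N` alone, so the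
multiplicativity of `ι` gives compatibility and the two-sided ideal `A_0` absorbs either
factor. For the Leibniz rule, the faces of `δ(f∪g)` merging two arguments inside the first
block are those of `(δf)∪g`, the ones inside the second block are those of `(−1)^m f∪(δg)`,
and the two remaining terms `±φ(a₀,…,a_{m-1}) aₘ ψ(a_{m+1},…)` cancel. -/

section Cup

variable {M : Type*}

theorem cup_apply [Mul M] {m n : ℕ} (φ : (Fin m → M) → M) (ψ : (Fin n → M) → M)
    (a : Fin (m + n) → M) :
    cup φ ψ a = φ (a ∘ Fin.castAdd n) * ψ (a ∘ Fin.natAdd m) :=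
  rfl

theorem Fin.castAdd_ne_natAdd {m n : ℕ} (i : Fin m) (j : Fin n) :
    Fin.castAdd n i ≠ Fin.natAdd m j :=
  Fin.ne_of_lt (by simp only [Fin.lt_def, Fin.val_castAdd, Fin.val_natAdd]; omega)

theorem cup_update_castAdd [Mul M] {m n : ℕ} (φ : (Fin m → M) → M) (ψ : (Fin n → M) → M)
    (a : Fin (m + n) → M) (i : Fin m) (x : M) :
    cup φ ψ (Function.update a (Fin.castAdd n i) x)
      = φ (Function.update (a ∘ Fin.castAdd n) i x) * ψ (a ∘ Fin.natAdd m) := by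
  rw [cup_apply, Function.update_comp_eq_of_injective _ (Fin.castAdd_injective m n) i,
    Function.update_comp_eq_of_forall_ne _ _ fun j => (Fin.castAdd_ne_natAdd i j).symm]

theorem cup_update_natAdd [Mul M] {m n : ℕ} (φ : (Fin m → M) → M) (ψ : (Fin n → M) → M)
    (a : Fin (m + n) → M) (j : Fin n) (x : M) :
    cup φ ψ (Function.update a (Fin.natAdd m j) x)
      = φ (a ∘ Fin.castAdd n) * ψ (Function.update (a ∘ Fin.natAdd m) j x) := by
  rw [cup_apply, Function.update_comp_eq_of_injective _ (Fin.natAdd_injective n m) j,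
    Function.update_comp_eq_of_forall_ne _ _ fun i => Fin.castAdd_ne_natAdd i j]

theorem IsMultilinearFn.cup {k : Type*} [CommRing k] [NonUnitalNonAssocRing M] [Module k M]
    [IsScalarTower k M M] [SMulCommClass k M M] {m n : ℕ}
    {φ : (Fin m → M) → M} {ψ : (Fin n → M) → M}
    (hφ : IsMultilinearFn k φ) (hψ : IsMultilinearFn k ψ) :
    IsMultilinearFn k (cup φ ψ) := by
  constructor
  · intro a i x y
    induction i using Fin.addCases with
    | left i => simp only [cup_update_castAdd, hφ.1, add_mul]
    | right j => simp only [cup_update_natAdd, hψ.1, mul_add]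
  · intro a i c x
    induction i using Fin.addCases with
    | left i => rw [cup_update_castAdd, cup_update_castAdd, hφ.2, smul_mul_assoc]
    | right j => rw [cup_update_natAdd, cup_update_natAdd, hψ.2, mul_smul_comm]

theorem map_cup {N F : Type*} [Mul M] [Mul N] [FunLike F M N] [MulHomClass F M N] (f : F)
    {m n : ℕ} {φ : (Fin m → M) → M} {ψ : (Fin n → M) → M}
    {φ' : (Fin m → N) → N} {ψ' : (Fin n → N) → N}
    (hφ : ∀ a, f (φ a) = φ' (f ∘ a)) (hψ : ∀ a, f (ψ a) = ψ' (f ∘ a)) (a : Fin (m + n) → M) :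
    f (cup φ ψ a) = cup φ' ψ' (f ∘ a) := by
  rw [cup_apply, cup_apply, map_mul, hφ, hψ]
  rfl

end Cup

section Hochschild

variable {M : Type*} [NonUnitalRing M] {m n : ℕ}

/- Tuples are read off a sequence `A : ℕ → M`, so that every reindexing in the Leibniz rule
becomes arithmetic on natural numbers. -/
theorem hochschildDiffM_cup_of_seq (φ : (Fin m → M) → M) (ψ : (Fin n → M) → M) (A : ℕ → M) :
    hochschildDiffM (· * ·) (cup φ ψ) (fun i : Fin (m + n + 1) => A i)
      = cup (hochschildDiffM (· * ·) φ) ψ (fun i : Fin (m + 1 + n) => A i)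
        + ((-1 : ℤ) ^ m) •
            cup φ (hochschildDiffM (· * ·) ψ) (fun i : Fin (m + (n + 1)) => A i) := by
  simp only [hochschildDiffM, cup, Fin.sum_univ_add, Fin.val_succ, Fin.val_castSucc, Fin.val_last,
    Fin.val_zero, Fin.val_castAdd, Fin.val_natAdd, Nat.add_zero, Nat.add_lt_add_iff_left,
    Nat.add_left_cancel_iff]
  -- a face merging inside the `φ`-block leaves the `ψ`-block shifted by one, and vice versa
  simp (disch := omega) only [if_pos, if_neg]
  have hidx : ∀ j : ℕ, m + 1 + j = m + j + 1 := fun j => by omega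
  have hsign : (-1 : ℤ) ^ (m + 1) = -(-1) ^ m := by ring
  simp only [add_mul, mul_add, Finset.sum_mul, Finset.mul_sum, Finset.smul_sum, smul_add,
    smul_smul, smul_mul_assoc, mul_smul_comm, mul_assoc, ← pow_add, ← Nat.add_assoc, hidx, hsign,
    neg_smul, neg_mul]
  abel

theorem hochschildDiffM_cup (φ : (Fin m → M) → M) (ψ : (Fin n → M) → M)
    (a : Fin (m + n + 1) → M) :
    hochschildDiffM (· * ·) (cup φ ψ) a
      = cup (hochschildDiffM (· * ·) φ) ψ (a ∘ Fin.cast (by omega))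
        + ((-1 : ℤ) ^ m) • cup φ (hochschildDiffM (· * ·) ψ) (a ∘ Fin.cast (by omega)) := by
  obtain ⟨A, rfl⟩ : ∃ A : ℕ → M, a = fun i => A i.val :=
    ⟨fun t => if h : t < m + n + 1 then a ⟨t, h⟩ else 0, funext fun i => by simp [i.isLt]⟩
  exact hochschildDiffM_cup_of_seq φ ψ A

end Hochschild

namespace ConstraintAlgebra

variable (A : ConstraintAlgebra k AT AN) {m n : ℕ} (φ : (Fin m → AN) → AN) (ψ : (Fin n → AN) → AN)

theorem cup_mem_zero_of_left {a : Fin (m + n) → AN} (h : φ (a ∘ Fin.castAdd n) ∈ A.zero) :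
    cup φ ψ a ∈ A.zero :=
  A.mem_zero_mul _ _ h

theorem cup_mem_zero_of_right {a : Fin (m + n) → AN} (h : ψ (a ∘ Fin.natAdd m) ∈ A.zero) :
    cup φ ψ a ∈ A.zero :=
  A.mul_mem_zero _ _ h

theorem cup_mem_zero_of_exists_mem_zero {φ ψ}
    (hφ : ∀ a : Fin m → AN, (∃ i, a i ∈ A.zero) → φ a ∈ A.zero)
    (hψ : ∀ a : Fin n → AN, (∃ i, a i ∈ A.zero) → ψ a ∈ A.zero)
    (a : Fin (m + n) → AN) (ha : ∃ i, a i ∈ A.zero) : cup φ ψ a ∈ A.zero := by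
  obtain ⟨i, hi⟩ := ha
  induction i using Fin.addCases with
  | left i => exact A.cup_mem_zero_of_left φ ψ (hφ _ ⟨i, hi⟩)
  | right j => exact A.cup_mem_zero_of_right φ ψ (hψ _ ⟨j, hi⟩)

end ConstraintAlgebra

theorem IsConstraintCochain.cup {A : ConstraintAlgebra k AT AN} {m n : ℕ}
    {fT : (Fin m → AT) → AT} {fN : (Fin m → AN) → AN}
    {gT : (Fin n → AT) → AT} {gN : (Fin n → AN) → AN}
    (hf : IsConstraintCochain A fT fN) (hg : IsConstraintCochain A gT gN) :
    IsConstraintCochain A (cup fT gT) (cup fN gN) :=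
  ⟨hf.1.cup hg.1, hf.2.1.cup hg.2.1, map_cup A.iota hf.2.2.1 hg.2.2.1,
    A.cup_mem_zero_of_exists_mem_zero hf.2.2.2 hg.2.2.2⟩

/-- The cup product of constraint cochains is a constraint cochain,
it preserves the `0`-component, and the Hochschild differential is a graded derivation
of the cup product: `δ(f∪g) = (δf)∪g + (−1)^m f∪(δg)` in both components. -/
theorem cup_product_constraint (A : ConstraintAlgebra k AT AN) {m n : ℕ}
    (fT : (Fin m → AT) → AT) (fN : (Fin m → AN) → AN)
    (gT : (Fin n → AT) → AT) (gN : (Fin n → AN) → AN)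
    (hf : IsConstraintCochain A fT fN) (hg : IsConstraintCochain A gT gN) :
    IsConstraintCochain A (cup fT gT) (cup fN gN) ∧
    (((∀ a : Fin m → AN, fN a ∈ A.zero) ∨ (∀ a : Fin n → AN, gN a ∈ A.zero)) →
      ∀ a : Fin (m + n) → AN, cup fN gN a ∈ A.zero) ∧
    (∀ a : Fin (m + n + 1) → AT,
      hochschildDiffM (· * ·) (cup fT gT) a
        = cup (hochschildDiffM (· * ·) fT) gT
            (fun i => a ⟨i.val, by have hi := i.isLt; omega⟩)
          + ((-1 : ℤ) ^ m) • cup fT (hochschildDiffM (· * ·) gT)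
              (fun i => a ⟨i.val, by have hi := i.isLt; omega⟩)) ∧
    (∀ a : Fin (m + n + 1) → AN,
      hochschildDiffM (· * ·) (cup fN gN) a
        = cup (hochschildDiffM (· * ·) fN) gN
            (fun i => a ⟨i.val, by have hi := i.isLt; omega⟩)
          + ((-1 : ℤ) ^ m) • cup fN (hochschildDiffM (· * ·) gN)
              (fun i => a ⟨i.val, by have hi := i.isLt; omega⟩)) := by
  refine ⟨hf.cup hg, ?_, hochschildDiffM_cup fT gT, hochschildDiffM_cup fN gN⟩
  rintro (hf₀ | hg₀) a
  · exact A.cup_mem_zero_of_left fN gN (hf₀ _)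
  · exact A.cup_mem_zero_of_right fN gN (hg₀ _)
end

section
/- Let A = (A_T, A_N, ι, A_0) be a constraint k-algebra and let A_red := A_N / A_0 be the quotient algebra. For every constraint n-cochain f = (f_T, f_N) on A there is a unique k-multilinear map f_red : A_red^n → A_red with f_red([a_1],…,[a_n]) = [f_N(a_1,…,a_n)] for all a_1,…,a_n ∈ A_N. The assignment f ↦ f_red is k-linear, its kernel is exactly the 0-component of constraint n-cochains (so it descends to an injective k-linear map from C^n(A)_N / C^n(A)_0 into the n-multilinear maps on A_red), and it intertwines the Hochschild differentials: (δf)_red = δ(f_red). -/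
universe u v w

variable {k : Type u} [CommRing k] {AT : Type v} {AN : Type w}
  [Ring AT] [Ring AN] [Algebra k AT] [Algebra k AN]

section Helpers

lemma mk_zsmul' {M : Type*} [AddCommGroup M] [Module k M] (p : Submodule k M) (z : ℤ) (x : M) :
    (Submodule.Quotient.mk (z • x) : M ⧸ p) = z • Submodule.Quotient.mk x := by
  rw [← Submodule.mkQ_apply, map_zsmul, Submodule.mkQ_apply]

lemma mk_sum' {M : Type*} [AddCommGroup M] [Module k M] {ι : Type*} (p : Submodule k M)
    (s : Finset ι) (x : ι → M) :
    (Submodule.Quotient.mk (∑ i ∈ s, x i) : M ⧸ p) = ∑ i ∈ s, Submodule.Quotient.mk (x i) := by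
  rw [← Submodule.mkQ_apply, map_sum]
  simp [Submodule.mkQ_apply]

lemma red_congr (A : ConstraintAlgebra k AT AN) {n : ℕ} (fN : (Fin n → AN) → AN)
    (hadd : ∀ (v : Fin n → AN) (i : Fin n) (x y : AN),
      fN (Function.update v i (x + y)) = fN (Function.update v i x) + fN (Function.update v i y))
    (hz : ∀ a : Fin n → AN, (∃ i, a i ∈ A.zero) → fN a ∈ A.zero)
    (a b : Fin n → AN) (h : ∀ i, a i - b i ∈ A.zero) :
    (Submodule.Quotient.mk (fN a) : AN ⧸ A.zero) = Submodule.Quotient.mk (fN b) := by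
  have key : ∀ s : Finset (Fin n),
      (Submodule.Quotient.mk (fN fun i => if i ∈ s then b i else a i) : AN ⧸ A.zero)
        = Submodule.Quotient.mk (fN a) := by
    intro s
    induction s using Finset.induction_on with
    | empty => simp
    | @insert j s hj ih =>
      set g : Fin n → AN := fun i => if i ∈ s then b i else a i with hg
      have hgj : g j = a j := by simp [hg, hj]
      have hfun : (fun i => if i ∈ insert j s then b i else a i)
          = Function.update g j (b j) := by
        funext i
        rcases eq_or_ne i j with rfl | hi
        · simp [Function.update_self]
        · simp [Function.update_of_ne hi, hg, hi]
      have hb : b j = a j + (b j - a j) := by abel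
      have h1 : Function.update g j (a j) = g := by
        rw [← hgj, Function.update_eq_self]
      have h2 : fN (Function.update g j (b j - a j)) ∈ A.zero := by
        refine hz _ ⟨j, ?_⟩
        rw [Function.update_self]
        have := neg_mem (h j)
        rwa [neg_sub] at this
      rw [hfun, hb, hadd, Submodule.Quotient.mk_add, h1,
        (Submodule.Quotient.mk_eq_zero _).2 h2, add_zero]
      exact ih
  have := key Finset.univ
  simpa using this.symm

end Helpers

/-- Every constraint `n`-cochain `f` descends to a unique multilinear
map `f_red` on the reduced algebra `A_red = A_N/A_0`; the assignment `f ↦ f_red` is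
`k`-linear with kernel exactly the `0`-component (hence injective on
`C^n(A)_N / C^n(A)_0`), and it intertwines the Hochschild differentials, where the
multiplication of `A_red` is the one induced by that of `A_N`. -/
theorem constraint_cochain_reduction (A : ConstraintAlgebra k AT AN) {n : ℕ}
    (fT : (Fin n → AT) → AT) (fN : (Fin n → AN) → AN)
    (hf : IsConstraintCochain A fT fN) :
    (∃! fred : (Fin n → AN ⧸ A.zero) → AN ⧸ A.zero,
        IsMultilinearFn k fred ∧
          ∀ a : Fin n → AN,
            fred (fun i => Submodule.Quotient.mk (a i)) = Submodule.Quotient.mk (fN a)) ∧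
    (∀ (gT : (Fin n → AT) → AT) (gN : (Fin n → AN) → AN),
        IsConstraintCochain A gT gN →
        ∀ (c d : k) (fred gred : (Fin n → AN ⧸ A.zero) → AN ⧸ A.zero),
          (∀ a : Fin n → AN,
            fred (fun i => Submodule.Quotient.mk (a i)) = Submodule.Quotient.mk (fN a)) →
          (∀ a : Fin n → AN,
            gred (fun i => Submodule.Quotient.mk (a i)) = Submodule.Quotient.mk (gN a)) →
          ∀ a : Fin n → AN,
            c • fred (fun i => Submodule.Quotient.mk (a i))
                + d • gred (fun i => Submodule.Quotient.mk (a i))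
              = Submodule.Quotient.mk (c • fN a + d • gN a)) ∧
    (∀ fred : (Fin n → AN ⧸ A.zero) → AN ⧸ A.zero,
        (∀ a : Fin n → AN,
          fred (fun i => Submodule.Quotient.mk (a i)) = Submodule.Quotient.mk (fN a)) →
        ((∀ v, fred v = 0) ↔ ∀ a : Fin n → AN, fN a ∈ A.zero)) ∧
    (∃ qmul : (AN ⧸ A.zero) → (AN ⧸ A.zero) → (AN ⧸ A.zero),
        ∀ a b : AN,
          qmul (Submodule.Quotient.mk a) (Submodule.Quotient.mk b)
            = Submodule.Quotient.mk (a * b)) ∧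
    (∀ qmul : (AN ⧸ A.zero) → (AN ⧸ A.zero) → (AN ⧸ A.zero),
        (∀ a b : AN,
          qmul (Submodule.Quotient.mk a) (Submodule.Quotient.mk b)
            = Submodule.Quotient.mk (a * b)) →
        ∀ fred : (Fin n → AN ⧸ A.zero) → AN ⧸ A.zero,
          (∀ a : Fin n → AN,
            fred (fun i => Submodule.Quotient.mk (a i)) = Submodule.Quotient.mk (fN a)) →
          ∀ a : Fin (n + 1) → AN,
            hochschildDiffM qmul fred (fun i => Submodule.Quotient.mk (a i))
              = Submodule.Quotient.mk (hochschildDiffM (· * ·) fN a)) := by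
  obtain ⟨hfT, hfN, hcomm, hzero⟩ := hf
  have surj : Function.Surjective (Submodule.Quotient.mk : AN → AN ⧸ A.zero) :=
    Submodule.Quotient.mk_surjective A.zero
  set lift : (AN ⧸ A.zero) → AN := Function.surjInv surj with hliftdef
  have hlift : ∀ v, (Submodule.Quotient.mk (lift v) : AN ⧸ A.zero) = v :=
    fun v => Function.surjInv_eq surj v
  have hdiff : ∀ y : AN, lift (Submodule.Quotient.mk y) - y ∈ A.zero :=
    fun y => (Submodule.Quotient.eq A.zero).1 (hlift _)
  set fred0 : (Fin n → AN ⧸ A.zero) → AN ⧸ A.zero :=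
    fun v => Submodule.Quotient.mk (fN fun i => lift (v i)) with hfred0
  have hred : ∀ a : Fin n → AN,
      fred0 (fun i => Submodule.Quotient.mk (a i)) = Submodule.Quotient.mk (fN a) :=
    fun a => red_congr A fN hfN.1 hzero _ a (fun i => hdiff (a i))
  have hup : ∀ (v : Fin n → AN ⧸ A.zero) (i : Fin n) (z : AN ⧸ A.zero),
      (fun j => lift (Function.update v i z j))
        = Function.update (fun j => lift (v j)) i (lift z) := by
    intro v i z
    funext j
    rcases eq_or_ne j i with rfl | hj
    · simp
    · simp [Function.update_of_ne hj]
  have hswap : ∀ (v : Fin n → AN ⧸ A.zero) (i : Fin n) (x y : AN),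
      x - y ∈ A.zero →
      fred0 (Function.update v i (Submodule.Quotient.mk x))
        = Submodule.Quotient.mk (fN (Function.update (fun j => lift (v j)) i y)) := by
    intro v i x y hxy
    show Submodule.Quotient.mk (fN fun j => lift (Function.update v i _ j)) = _
    rw [hup]
    refine red_congr A fN hfN.1 hzero _ _ (fun j => ?_)
    rcases eq_or_ne j i with rfl | hj
    · simp only [Function.update_self]
      have h1 := hdiff x
      have := add_mem h1 hxy
      rwa [sub_add_sub_cancel] at this
    · simp [Function.update_of_ne hj, zero_mem]
  refine ⟨⟨fred0, ⟨⟨?_, ?_⟩, hred⟩, ?_⟩, ?_, ?_, ?_, ?_⟩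
  · -- additivity of fred0
    intro v i x y
    have hx : fred0 (Function.update v i x)
        = Submodule.Quotient.mk (fN (Function.update (fun j => lift (v j)) i (lift x))) := by
      have := hswap v i (lift x) (lift x) (by simp [zero_mem])
      rwa [hlift] at this
    have hy : fred0 (Function.update v i y)
        = Submodule.Quotient.mk (fN (Function.update (fun j => lift (v j)) i (lift y))) := by
      have := hswap v i (lift y) (lift y) (by simp [zero_mem])
      rwa [hlift] at this
    have hxy : fred0 (Function.update v i (x + y))
        = Submodule.Quotient.mk
            (fN (Function.update (fun j => lift (v j)) i (lift x + lift y))) := by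
      have hmem : lift (x + y) - (lift x + lift y) ∈ A.zero := by
        rw [← Submodule.Quotient.mk_eq_zero]
        simp [Submodule.Quotient.mk_sub, Submodule.Quotient.mk_add, hlift]
      have := hswap v i (lift (x + y)) (lift x + lift y) hmem
      rwa [hlift] at this
    rw [hxy, hfN.1, Submodule.Quotient.mk_add, ← hx, ← hy]
  · -- homogeneity of fred0
    intro v i c x
    have hx : fred0 (Function.update v i x)
        = Submodule.Quotient.mk (fN (Function.update (fun j => lift (v j)) i (lift x))) := by
      have := hswap v i (lift x) (lift x) (by simp [zero_mem])
      rwa [hlift] at this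
    have hcx : fred0 (Function.update v i (c • x))
        = Submodule.Quotient.mk
            (fN (Function.update (fun j => lift (v j)) i (c • lift x))) := by
      have hmem : lift (c • x) - c • lift x ∈ A.zero := by
        rw [← Submodule.Quotient.mk_eq_zero]
        simp [Submodule.Quotient.mk_sub, Submodule.Quotient.mk_smul, hlift]
      have := hswap v i (lift (c • x)) (c • lift x) hmem
      rwa [hlift] at this
    rw [hcx, hfN.2, Submodule.Quotient.mk_smul, ← hx]
  · -- uniqueness
    rintro g ⟨-, hg⟩
    funext v
    have hv : (fun i => Submodule.Quotient.mk (lift (v i))) = v := funext fun i => hlift _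
    calc g v = g (fun i => Submodule.Quotient.mk (lift (v i))) := by rw [hv]
      _ = Submodule.Quotient.mk (fN fun i => lift (v i)) := hg _
      _ = fred0 v := rfl
  · -- linearity
    intro gT gN hg c d fr gr hfr hgr a
    rw [hfr, hgr, Submodule.Quotient.mk_add, Submodule.Quotient.mk_smul,
      Submodule.Quotient.mk_smul]
  · -- kernel
    intro fr hfr
    constructor
    · intro h0 a
      have := h0 (fun i => Submodule.Quotient.mk (a i))
      rw [hfr] at this
      exact (Submodule.Quotient.mk_eq_zero _).1 this
    · intro hall v
      have hv : (fun i => Submodule.Quotient.mk (lift (v i))) = v := funext fun i => hlift _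
      rw [← hv, hfr]
      exact (Submodule.Quotient.mk_eq_zero _).2 (hall _)
  · -- existence of qmul
    refine ⟨fun x y => Submodule.Quotient.mk (lift x * lift y), fun a b => ?_⟩
    rw [Submodule.Quotient.eq]
    have h1 : (lift (Submodule.Quotient.mk a) - a) * lift (Submodule.Quotient.mk b) ∈ A.zero :=
      A.mem_zero_mul _ _ (hdiff a)
    have h2 : a * (lift (Submodule.Quotient.mk b) - b) ∈ A.zero :=
      A.mul_mem_zero _ _ (hdiff b)
    have := add_mem h1 h2
    have heq : (lift (Submodule.Quotient.mk a) - a) * lift (Submodule.Quotient.mk b)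
        + a * (lift (Submodule.Quotient.mk b) - b)
        = lift (Submodule.Quotient.mk a) * lift (Submodule.Quotient.mk b) - a * b := by noncomm_ring
    rwa [heq] at this
  · -- Hochschild compatibility
    intro qmul hq fr hfr a
    simp only [hochschildDiffM, hq, ← apply_ite (Submodule.Quotient.mk (p := A.zero)), hfr,
      ← mk_zsmul', ← mk_sum', ← Submodule.Quotient.mk_add]
end

section
/- Consider ℝ^{2n} with coordinates (q^1,…,q^n,p_1,…,p_n), fix 0 ≤ k ≤ n, and let C = { p_{k+1} = … = p_n = 0 } ⊆ ℝ^{2n}. Say a smooth function f : ℝ^{2n} → ℝ lies in the N-component if ∂f/∂q^j vanishes at every point of C for every j ∈ {k+1,…,n}, and in the 0-component if f vanishes on C. For r ≥ 1 define the r-th coefficient of the standard-ordered star product by C_r(f,g) = (1/r!) Σ_{i_1,…,i_r=1}^{n} (∂^r f / ∂p_{i_1}⋯∂p_{i_r}) · (∂^r g / ∂q^{i_1}⋯∂q^{i_r}). Then for every r ≥ 1: (1) if f and g both lie in the N-component, then C_r(f,g) lies in the N-component; (2) if f lies in the 0-component and g in the N-component, or f lies in the N-component and g in the 0-component, then C_r(f,g)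 lies in the 0-component. In particular each C_r is a constraint bilinear map on smooth functions, so the standard-ordered star product is a constraint multiplication. -/
/-- The partial derivative in the direction of the coordinate `q^i` on
`ℝ^{2n} = (Fin n → ℝ) × (Fin n → ℝ)` (first factor: the `q`'s). -/
noncomputable def pderivQ {n : ℕ} (i : Fin n)
    (f : (Fin n → ℝ) × (Fin n → ℝ) → ℝ) : (Fin n → ℝ) × (Fin n → ℝ) → ℝ :=
  fun x => fderiv ℝ f x (Pi.single i 1, 0)

/-- The partial derivative in the direction of the coordinate `p_i` on
`ℝ^{2n} = (Fin n → ℝ) × (Fin n → ℝ)` (second factor: the `p`'s). -/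
noncomputable def pderivP {n : ℕ} (i : Fin n)
    (f : (Fin n → ℝ) × (Fin n → ℝ) → ℝ) : (Fin n → ℝ) × (Fin n → ℝ) → ℝ :=
  fun x => fderiv ℝ f x (0, Pi.single i 1)

/-- Iterated partial derivatives `∂^r/∂q^{i_1}⋯∂q^{i_r}`. -/
noncomputable def pderivsQ {n r : ℕ} (I : Fin r → Fin n)
    (f : (Fin n → ℝ) × (Fin n → ℝ) → ℝ) : (Fin n → ℝ) × (Fin n → ℝ) → ℝ :=
  (List.ofFn I).foldr pderivQ f

/-- Iterated partial derivatives `∂^r/∂p_{i_1}⋯∂p_{i_r}`. -/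
noncomputable def pderivsP {n r : ℕ} (I : Fin r → Fin n)
    (f : (Fin n → ℝ) × (Fin n → ℝ) → ℝ) : (Fin n → ℝ) × (Fin n → ℝ) → ℝ :=
  (List.ofFn I).foldr pderivP f

/-- Membership in the coisotropic subspace `C = {p_{k+1} = … = p_n = 0}`
(`0`-indexed: `p_j = 0` for `k ≤ j`). -/
def OnC {n : ℕ} (k : ℕ) (x : (Fin n → ℝ) × (Fin n → ℝ)) : Prop :=
  ∀ j : Fin n, k ≤ j.val → x.2 j = 0

/-- `f` lies in the `N`-component: `∂f/∂q^j` vanishes on `C` for all `j ∈ {k+1,…,n}`. -/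
def MemN {n : ℕ} (k : ℕ) (f : (Fin n → ℝ) × (Fin n → ℝ) → ℝ) : Prop :=
  ∀ j : Fin n, k ≤ j.val → ∀ x, OnC k x → pderivQ j f x = 0

/-- `f` lies in the `0`-component: `f` vanishes on `C`. -/
def MemZ {n : ℕ} (k : ℕ) (f : (Fin n → ℝ) × (Fin n → ℝ) → ℝ) : Prop :=
  ∀ x, OnC k x → f x = 0

/-- The `r`-th coefficient of the standard-ordered star product:
`C_r(f,g) = (1/r!) Σ_{i_1,…,i_r} (∂^r f/∂p_{i_1}⋯∂p_{i_r})·(∂^r g/∂q^{i_1}⋯∂q^{i_r})`. -/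
noncomputable def stdOrderedCoeff {n : ℕ} (r : ℕ)
    (f g : (Fin n → ℝ) × (Fin n → ℝ) → ℝ) : (Fin n → ℝ) × (Fin n → ℝ) → ℝ :=
  fun x => (1 / r.factorial : ℝ) * ∑ I : Fin r → Fin n, pderivsP I f x * pderivsQ I g x


/-! Derivatives along directions tangent to `C` (every `∂/∂q^i`, and `∂/∂p_i` for `i ≤ k`)
preserve the functions vanishing on `C`, and for `g` in the `N`-component every
`∂^r g/∂q^{i_1}⋯∂q^{i_r}` with some `i_l > k` vanishes on `C` (commute `∂/∂q^{i_l}` innermost).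
So in each summand of `C_r(f, g)` either the `q`-derivative of `g` vanishes on `C`, or all
indices are `≤ k` and the `p`-derivative of a `0`-component `f` vanishes on `C`. The `N`-case
reduces to this one through the Leibniz rule
`∂_{q^j} C_r(f, g) = C_r(∂_{q^j} f, g) + C_r(f, ∂_{q^j} g)`, valid because partial
derivatives of smooth functions commute. -/

section DirectionalDerivative

variable {𝕜 E F : Type*} [NontriviallyNormedField 𝕜] [NormedAddCommGroup E] [NormedSpace 𝕜 E]
  [NormedAddCommGroup F] [NormedSpace 𝕜 F] {f : E → F}

theorem ContDiff.fderiv_apply_const (hf : ContDiff 𝕜 (⊤ : ℕ∞) f) (v : E) :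
    ContDiff 𝕜 (⊤ : ℕ∞) fun x => fderiv 𝕜 f x v :=
  (hf.fderiv_right (m := (⊤ : ℕ∞)) (by norm_cast)).clm_apply contDiff_const

theorem fderiv_apply_eq_zero_of_forall_add_smul {x v : E} (hf : DifferentiableAt 𝕜 f x)
    (h : ∀ t : 𝕜, f (x + t • v) = 0) : fderiv 𝕜 f x v = 0 := by
  rw [← hf.lineDeriv_eq_fderiv, lineDeriv, funext h, deriv_const]

theorem fderiv_fderiv_apply_comm [IsRCLikeNormedField 𝕜] (hf : ContDiff 𝕜 (⊤ : ℕ∞) f)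
    (v w x : E) :
    fderiv 𝕜 (fun y => fderiv 𝕜 f y v) x w = fderiv 𝕜 (fun y => fderiv 𝕜 f y w) x v := by
  have hd : DifferentiableAt 𝕜 (fderiv 𝕜 f) x :=
    (hf.fderiv_right (m := (⊤ : ℕ∞)) (by norm_cast)).differentiable (by simp) x
  have hsymm : IsSymmSndFDerivAt 𝕜 f x :=
    hf.contDiffAt.isSymmSndFDerivAt (by rw [minSmoothness_of_isRCLikeNormedField]; norm_cast)
  rw [fderiv_clm_apply hd (differentiableAt_const v),
    fderiv_clm_apply hd (differentiableAt_const w)]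
  simpa using hsymm.eq w v

end DirectionalDerivative

section PhaseSpace

variable {n k : ℕ} {f g : (Fin n → ℝ) × (Fin n → ℝ) → ℝ}

theorem OnC.add_smul {x v : (Fin n → ℝ) × (Fin n → ℝ)} (hx : OnC k x) (hv : OnC k v) (t : ℝ) :
    OnC k (x + t • v) := fun j hj => by simp [hx j hj, hv j hj]

theorem onC_single_q (i : Fin n) : OnC k ((Pi.single i 1 : Fin n → ℝ), (0 : Fin n → ℝ)) :=
  fun _ _ => rfl

theorem onC_single_p {i : Fin n} (hi : i.val < k) :
    OnC k ((0 : Fin n → ℝ), (Pi.single i 1 : Fin n → ℝ)) :=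
  fun j hj => Pi.single_eq_of_ne (fun h => by omega) 1

theorem memZ_fderiv_apply (hfZ : MemZ k f) (hf : Differentiable ℝ f)
    {v : (Fin n → ℝ) × (Fin n → ℝ)} (hv : OnC k v) : MemZ k fun x => fderiv ℝ f x v :=
  fun x hx => fderiv_apply_eq_zero_of_forall_add_smul (hf x) fun t => hfZ _ (hx.add_smul hv t)

theorem contDiff_pderivQ (hf : ContDiff ℝ (⊤ : ℕ∞) f) (i : Fin n) :
    ContDiff ℝ (⊤ : ℕ∞) (pderivQ i f) :=
  hf.fderiv_apply_const _

theorem contDiff_pderivP (hf : ContDiff ℝ (⊤ : ℕ∞) f) (i : Fin n) :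
    ContDiff ℝ (⊤ : ℕ∞) (pderivP i f) :=
  hf.fderiv_apply_const _

theorem memZ_pderivQ (hf : ContDiff ℝ (⊤ : ℕ∞) f) (hfZ : MemZ k f) (i : Fin n) :
    MemZ k (pderivQ i f) :=
  memZ_fderiv_apply hfZ (hf.differentiable (by simp)) (onC_single_q i)

theorem memZ_pderivP (hf : ContDiff ℝ (⊤ : ℕ∞) f) (hfZ : MemZ k f) {i : Fin n} (hi : i.val < k) :
    MemZ k (pderivP i f) :=
  memZ_fderiv_apply hfZ (hf.differentiable (by simp)) (onC_single_p hi)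

theorem contDiff_foldr_pderivQ (hf : ContDiff ℝ (⊤ : ℕ∞) f) (L : List (Fin n)) :
    ContDiff ℝ (⊤ : ℕ∞) (L.foldr pderivQ f) :=
  L.foldrRecOn _ hf fun _ h i _ => contDiff_pderivQ h i

theorem contDiff_foldr_pderivP (hf : ContDiff ℝ (⊤ : ℕ∞) f) (L : List (Fin n)) :
    ContDiff ℝ (⊤ : ℕ∞) (L.foldr pderivP f) :=
  L.foldrRecOn _ hf fun _ h i _ => contDiff_pderivP h i

theorem memZ_foldr_pderivQ (hf : ContDiff ℝ (⊤ : ℕ∞) f) (hfZ : MemZ k f) (L : List (Fin n)) :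
    MemZ k (L.foldr pderivQ f) :=
  (L.foldrRecOn (motive := fun h => MemZ k h ∧ ContDiff ℝ (⊤ : ℕ∞) h) _ ⟨hfZ, hf⟩
    fun _ h i _ => ⟨memZ_pderivQ h.2 h.1 i, contDiff_pderivQ h.2 i⟩).1

theorem memZ_foldr_pderivP (hf : ContDiff ℝ (⊤ : ℕ∞) f) (hfZ : MemZ k f) {L : List (Fin n)}
    (hL : ∀ i ∈ L, i.val < k) : MemZ k (L.foldr pderivP f) :=
  (L.foldrRecOn (motive := fun h => MemZ k h ∧ ContDiff ℝ (⊤ : ℕ∞) h) _ ⟨hfZ, hf⟩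
    fun _ h i hi => ⟨memZ_pderivP h.2 h.1 (hL i hi), contDiff_pderivP h.2 i⟩).1

theorem pderivQ_pderivQ_comm (hf : ContDiff ℝ (⊤ : ℕ∞) f) (i j : Fin n) :
    pderivQ j (pderivQ i f) = pderivQ i (pderivQ j f) :=
  funext (fderiv_fderiv_apply_comm hf _ _)

theorem pderivQ_pderivP_comm (hf : ContDiff ℝ (⊤ : ℕ∞) f) (i j : Fin n) :
    pderivQ j (pderivP i f) = pderivP i (pderivQ j f) :=
  funext (fderiv_fderiv_apply_comm hf _ _)

theorem pderivQ_foldr_pderivQ (hf : ContDiff ℝ (⊤ : ℕ∞) f) (j : Fin n) (L : List (Fin n)) :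
    pderivQ j (L.foldr pderivQ f) = L.foldr pderivQ (pderivQ j f) := by
  induction L with
  | nil => rfl
  | cons i L ih =>
    rw [List.foldr_cons, pderivQ_pderivQ_comm (contDiff_foldr_pderivQ hf L), ih]
    rfl

theorem pderivQ_foldr_pderivP (hf : ContDiff ℝ (⊤ : ℕ∞) f) (j : Fin n) (L : List (Fin n)) :
    pderivQ j (L.foldr pderivP f) = L.foldr pderivP (pderivQ j f) := by
  induction L with
  | nil => rfl
  | cons i L ih =>
    rw [List.foldr_cons, pderivQ_pderivP_comm (contDiff_foldr_pderivP hf L), ih]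
    rfl

theorem memZ_foldr_pderivQ_of_memN (hf : ContDiff ℝ (⊤ : ℕ∞) f) (hfN : MemN k f)
    {L : List (Fin n)} (hL : ∃ j ∈ L, k ≤ j.val) : MemZ k (L.foldr pderivQ f) := by
  induction L with
  | nil => simp at hL
  | cons i L ih =>
    by_cases hi : k ≤ i.val
    · rw [List.foldr_cons, pderivQ_foldr_pderivQ hf]
      exact memZ_foldr_pderivQ (contDiff_pderivQ hf i) (hfN i hi) L
    · obtain ⟨j, hjL, hj⟩ := hL
      have hjL' : j ∈ L := (List.mem_cons.mp hjL).resolve_left (by rintro rfl; exact hi hj)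
      exact memZ_pderivQ (contDiff_foldr_pderivQ hf L) (ih ⟨j, hjL', hj⟩) i

theorem memZ_stdOrderedCoeff_of_memZ_right (hg : ContDiff ℝ (⊤ : ℕ∞) g) (hgZ : MemZ k g)
    (r : ℕ) (f : (Fin n → ℝ) × (Fin n → ℝ) → ℝ) : MemZ k (stdOrderedCoeff r f g) := by
  intro x hx
  simp only [stdOrderedCoeff, pderivsQ, memZ_foldr_pderivQ hg hgZ _ x hx, mul_zero,
    Finset.sum_const_zero]

theorem memZ_stdOrderedCoeff_of_memZ_left (hf : ContDiff ℝ (⊤ : ℕ∞) f)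
    (hg : ContDiff ℝ (⊤ : ℕ∞) g) (hfZ : MemZ k f) (hgN : MemN k g) (r : ℕ) :
    MemZ k (stdOrderedCoeff r f g) := by
  intro x hx
  refine (congrArg _ (Finset.sum_eq_zero fun I _ => ?_)).trans (mul_zero _)
  by_cases hI : ∃ l, k ≤ (I l).val
  · obtain ⟨l, hl⟩ := hI
    have hQ := memZ_foldr_pderivQ_of_memN hg hgN ⟨I l, List.mem_ofFn.mpr ⟨l, rfl⟩, hl⟩ x hx
    simp only [pderivsQ, hQ, mul_zero]
  · have hI' : ∀ i ∈ List.ofFn I, i.val < k := by simpa [List.mem_ofFn] using hI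
    have hP := memZ_foldr_pderivP hf hfZ hI' x hx
    simp only [pderivsP, hP, zero_mul]

theorem pderivQ_stdOrderedCoeff (hf : ContDiff ℝ (⊤ : ℕ∞) f) (hg : ContDiff ℝ (⊤ : ℕ∞) g)
    (j : Fin n) (r : ℕ) :
    pderivQ j (stdOrderedCoeff r f g) =
      stdOrderedCoeff r (pderivQ j f) g + stdOrderedCoeff r f (pderivQ j g) := by
  funext x
  have hP (I : Fin r → Fin n) : HasFDerivAt (pderivsP I f) (fderiv ℝ (pderivsP I f) x) x :=
    ((contDiff_foldr_pderivP hf _).differentiable (by simp) x).hasFDerivAt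
  have hQ (I : Fin r → Fin n) : HasFDerivAt (pderivsQ I g) (fderiv ℝ (pderivsQ I g) x) x :=
    ((contDiff_foldr_pderivQ hg _).differentiable (by simp) x).hasFDerivAt
  have hC : HasFDerivAt (stdOrderedCoeff r f g) _ x :=
    (HasFDerivAt.fun_sum fun I _ => (hP I).mul (hQ I)).const_mul (1 / r.factorial : ℝ)
  have hPQ (I : Fin r → Fin n) :
      fderiv ℝ (pderivsP I f) x (Pi.single j 1, 0) = pderivsP I (pderivQ j f) x :=
    congrFun (pderivQ_foldr_pderivP hf j _) x
  have hQQ (I : Fin r → Fin n) :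
      fderiv ℝ (pderivsQ I g) x (Pi.single j 1, 0) = pderivsQ I (pderivQ j g) x :=
    congrFun (pderivQ_foldr_pderivQ hg j _) x
  simp only [pderivQ, hC.fderiv, one_div, smul_apply, sum_apply, add_apply, hPQ, hQQ,
    smul_eq_mul, Pi.add_apply, stdOrderedCoeff]
  rw [← mul_add, ← Finset.sum_add_distrib]
  congr 1
  exact Finset.sum_congr rfl fun I _ => by ring

theorem memN_stdOrderedCoeff (hf : ContDiff ℝ (⊤ : ℕ∞) f) (hg : ContDiff ℝ (⊤ : ℕ∞) g)
    (hfN : MemN k f) (hgN : MemN k g) (r : ℕ) : MemN k (stdOrderedCoeff r f g) := by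
  intro j hj x hx
  rw [pderivQ_stdOrderedCoeff hf hg, Pi.add_apply,
    memZ_stdOrderedCoeff_of_memZ_left (contDiff_pderivQ hf j) hg (hfN j hj) hgN r x hx,
    memZ_stdOrderedCoeff_of_memZ_right (contDiff_pderivQ hg j) (hgN j hj) r f x hx, add_zero]

end PhaseSpace

theorem stdOrdered_star_product_constraint_general (n k : ℕ) :
    ∀ r : ℕ, 1 ≤ r → ∀ f g : (Fin n → ℝ) × (Fin n → ℝ) → ℝ,
      ContDiff ℝ (⊤ : ℕ∞) f → ContDiff ℝ (⊤ : ℕ∞) g →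
      ((MemN k f → MemN k g → MemN k (stdOrderedCoeff r f g)) ∧
        ((MemZ k f ∧ MemN k g) ∨ (MemN k f ∧ MemZ k g) →
          MemZ k (stdOrderedCoeff r f g))) := by
  intro r _ f g hf hg
  refine ⟨fun hfN hgN => memN_stdOrderedCoeff hf hg hfN hgN r, ?_⟩
  rintro (⟨hfZ, hgN⟩ | ⟨-, hgZ⟩)
  · exact memZ_stdOrderedCoeff_of_memZ_left hf hg hfZ hgN r
  · exact memZ_stdOrderedCoeff_of_memZ_right hg hgZ r f

/-- Each coefficient `C_r`, `r ≥ 1`, of the standard-ordered star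
product maps pairs of `N`-component functions to `N`-component functions, and maps a
pair into the `0`-component as soon as one argument is in the `0`-component and the
other in the `N`-component; hence the standard-ordered star product is a constraint
multiplication. -/
theorem stdOrdered_star_product_constraint (n k : ℕ) (hk : k ≤ n) :
    ∀ r : ℕ, 1 ≤ r → ∀ f g : (Fin n → ℝ) × (Fin n → ℝ) → ℝ,
      ContDiff ℝ (⊤ : ℕ∞) f → ContDiff ℝ (⊤ : ℕ∞) g →
      ((MemN k f → MemN k g → MemN k (stdOrderedCoeff r f g)) ∧
        ((MemZ k f ∧ MemN k g) ∨ (MemN k f ∧ MemZ k g) →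
          MemZ k (stdOrderedCoeff r f g))) :=
  stdOrdered_star_product_constraint_general n k
end
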